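/- arXiv:2507.21366 — 2 statements merged into one kernel-verified Lean document; each statement's English description precedes it below -/
import Mathlib

section
/- For every d < ω, a subset C ⊆ (2²)^d is a wide right-ω-comb if and only if no two-element subset of C is an up-1-comb. -/
/-- The index square `2²`. -/
abbrev Sq : Type := Fin 2 × Fin 2

/-- `{σ, τ}` is an up-1-comb: at the end of the longest common prefix the two
sequences have the same first coordinate and different second coordinates. -/
def UpPair {d : ℕ} (σ τ : Fin d → Sq) : Prop :=
  ∃ t : Fin d, (∀ s, s < t → σ s = τ s) ∧ (σ t).1 = (τ t).1 ∧ (σ t).2 ≠ (τ t).2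

/-- `A` is widely to the left of `B`: there is a common prefix `τ` (of length `t`)
such that every element of `A` extends `τ⌢(0,·)` and every element of `B` extends
`τ⌢(1,·)`. -/
def WidelyLeft {d : ℕ} (A B : Set (Fin d → Sq)) : Prop :=
  ∃ (t : Fin d) (τ : Fin d → Sq),
    (∀ α ∈ A ∪ B, ∀ s, s < t → α s = τ s) ∧
    (∀ α ∈ A, (α t).1 = 0) ∧ (∀ β ∈ B, (β t).1 = 1)

/-- Finite wide right-ω-combs: smallest class containing singletons and closed
under unions `A ∪ B` with `A` widely to the left of `B`. -/
inductive FinWideComb {d : ℕ} : Set (Fin d → Sq) → Prop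
  | single (α : Fin d → Sq) : FinWideComb {α}
  | union {A B : Set (Fin d → Sq)} : FinWideComb A → FinWideComb B →
      WidelyLeft A B → FinWideComb (A ∪ B)

/-- A set is a wide right-ω-comb if each of its non-empty finite subsets is a
finite wide right-ω-comb. -/
def WideComb {d : ℕ} (C : Set (Fin d → Sq)) : Prop :=
  ∀ A ⊆ C, A.Finite → A.Nonempty → FinWideComb A

lemma upPair_symm {d : ℕ} {σ τ : Fin d → Sq} (h : UpPair σ τ) : UpPair τ σ := by
  obtain ⟨t, h1, h2, h3⟩ := h
  exact ⟨t, fun s hs => (h1 s hs).symm, h2.symm, fun e => h3 e.symm⟩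

lemma fin2 : ∀ x : Fin 2, x = 0 ∨ x = 1 := by decide

lemma fin2_ne {x y : Fin 2} (h : x ≠ y) : (x = 0 ∧ y = 1) ∨ (x = 1 ∧ y = 0) := by
  revert h; revert x y; decide

lemma cross_no_upPair {d : ℕ} {A B : Set (Fin d → Sq)} (hW : WidelyLeft A B)
    {σ τ : Fin d → Sq} (hσ : σ ∈ A) (hτ : τ ∈ B) : ¬ UpPair σ τ := by
  obtain ⟨t, τ0, hpre, h0, h1⟩ := hW
  rintro ⟨t', he, hfst, hsnd⟩
  rcases lt_trichotomy t' t with hlt | heq | hgt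
  · have e1 := hpre σ (Or.inl hσ) t' hlt
    have e2 := hpre τ (Or.inr hτ) t' hlt
    exact hsnd (by rw [e1, e2])
  · subst heq
    rw [h0 σ hσ, h1 τ hτ] at hfst
    exact absurd hfst (by decide)
  · have : σ t = τ t := he t hgt
    have : (σ t).1 = (τ t).1 := by rw [this]
    rw [h0 σ hσ, h1 τ hτ] at this
    exact absurd this (by decide)

lemma finWideComb_no_upPair {d : ℕ} {A : Set (Fin d → Sq)} (h : FinWideComb A) :
    ∀ σ ∈ A, ∀ τ ∈ A, σ ≠ τ → ¬ UpPair σ τ := by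
  induction h with
  | single α =>
    intro σ hσ τ hτ hne
    simp only [Set.mem_singleton_iff] at hσ hτ
    exact absurd (hσ.trans hτ.symm) hne
  | union hA hB hW ihA ihB =>
    rintro σ (hσ | hσ) τ (hτ | hτ) hne
    · exact ihA σ hσ τ hτ hne
    · exact cross_no_upPair hW hσ hτ
    · exact fun hp => cross_no_upPair hW hτ hσ (upPair_symm hp)
    · exact ihB σ hσ τ hτ hne

lemma build_finWideComb {d : ℕ} {C : Set (Fin d → Sq)}
    (h : ∀ σ ∈ C, ∀ τ ∈ C, σ ≠ τ → ¬ UpPair σ τ) :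
    ∀ n : ℕ, ∀ A ⊆ C, A.Finite → A.Nonempty → A.ncard ≤ n → FinWideComb A := by
  intro n
  induction n with
  | zero =>
    intro A hAC hfin hne hcard
    have := (Set.ncard_pos hfin).mpr hne
    omega
  | succ n ih =>
    intro A hAC hfin hne hcard
    classical
    by_cases hsing : ∀ σ ∈ A, ∀ τ ∈ A, σ = τ
    · obtain ⟨α₀, hα₀⟩ := hne
      have : A = {α₀} := Set.eq_singleton_iff_unique_mem.mpr ⟨hα₀, fun x hx => hsing x hx α₀ hα₀⟩
      rw [this]; exact FinWideComb.single α₀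
    · push_neg at hsing
      obtain ⟨σ₀, hσ₀, τ₀, hτ₀, hne₀⟩ := hsing
      obtain ⟨s₀, hs₀⟩ := Function.ne_iff.mp hne₀
      set T : Finset (Fin d) := Finset.univ.filter
        (fun s => ∃ σ ∈ A, ∃ τ ∈ A, σ s ≠ τ s) with hT
      have hTne : T.Nonempty := ⟨s₀, by simp [hT]; exact ⟨σ₀, hσ₀, τ₀, hτ₀, hs₀⟩⟩
      set t := T.min' hTne with ht
      have htT : t ∈ T := T.min'_mem hTne
      have hmin : ∀ s, s < t → ∀ σ ∈ A, ∀ τ ∈ A, σ s = τ s := by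
        intro s hs σ hσ τ hτ
        by_contra hne'
        have : s ∈ T := by simp [hT]; exact ⟨σ, hσ, τ, hτ, hne'⟩
        exact absurd (T.min'_le s this) (not_le.mpr hs)
      obtain ⟨α₀, hα₀⟩ : A.Nonempty := ⟨σ₀, hσ₀⟩
      have hkey : ∀ σ ∈ A, ∀ τ ∈ A, σ t ≠ τ t → (σ t).1 ≠ (τ t).1 := by
        intro σ hσ τ hτ hnet hfst
        have hsnd : (σ t).2 ≠ (τ t).2 := by
          intro hs; exact hnet (Prod.ext hfst hs)
        have hneστ : σ ≠ τ := fun e => hnet (by rw [e])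
        exact h σ (hAC hσ) τ (hAC hτ) hneστ
          ⟨t, fun s hs => hmin s hs σ hσ τ hτ, hfst, hsnd⟩
      simp only [hT, Finset.mem_filter] at htT
      obtain ⟨-, σ₁, hσ₁, τ₁, hτ₁, hne₁⟩ := htT
      have h1ne : (σ₁ t).1 ≠ (τ₁ t).1 := hkey σ₁ hσ₁ τ₁ hτ₁ hne₁
      set A₀ : Set (Fin d → Sq) := {σ ∈ A | (σ t).1 = 0} with hA₀
      set A₁ : Set (Fin d → Sq) := {σ ∈ A | (σ t).1 = 1} with hA₁
      have hA₀ne : A₀.Nonempty ∧ A₁.Nonempty := by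
        rcases fin2_ne h1ne with ⟨e0, e1⟩ | ⟨e1, e0⟩
        · exact ⟨⟨σ₁, hσ₁, e0⟩, ⟨τ₁, hτ₁, e1⟩⟩
        · exact ⟨⟨τ₁, hτ₁, e0⟩, ⟨σ₁, hσ₁, e1⟩⟩
      have hunion : A = A₀ ∪ A₁ := by
        ext x
        constructor
        · intro hx
          rcases fin2 ((x t).1) with e | e
          · exact Or.inl ⟨hx, e⟩
          · exact Or.inr ⟨hx, e⟩
        · rintro (⟨hx, -⟩ | ⟨hx, -⟩) <;> exact hx
      have hssub₀ : A₀ ⊂ A := by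
        constructor
        · rintro x ⟨hx, -⟩; exact hx
        · intro hsub
          obtain ⟨x, hxA, hx1⟩ := hA₀ne.2
          have : (x t).1 = 0 := (hsub hxA).2
          rw [hx1] at this; exact absurd this (by decide)
      have hssub₁ : A₁ ⊂ A := by
        constructor
        · rintro x ⟨hx, -⟩; exact hx
        · intro hsub
          obtain ⟨x, hxA, hx1⟩ := hA₀ne.1
          have : (x t).1 = 1 := (hsub hxA).2
          rw [hx1] at this; exact absurd this (by decide)
      have hc₀ : A₀.ncard ≤ n := by
        have := Set.ncard_lt_ncard hssub₀ hfin; omega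
      have hc₁ : A₁.ncard ≤ n := by
        have := Set.ncard_lt_ncard hssub₁ hfin; omega
      have hW : WidelyLeft A₀ A₁ := by
        refine ⟨t, α₀, ?_, fun α hα => hα.2, fun β hβ => hβ.2⟩
        rintro α (⟨hα, -⟩ | ⟨hα, -⟩) s hs <;> exact hmin s hs α hα α₀ hα₀
      rw [hunion]
      exact FinWideComb.union
        (ih A₀ (fun x hx => hAC hx.1) (hfin.subset hssub₀.1) hA₀ne.1 hc₀)
        (ih A₁ (fun x hx => hAC hx.1) (hfin.subset hssub₁.1) hA₀ne.2 hc₁)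
        hW


/-- `C ⊆ (2²)^d` is a wide right-ω-comb iff no two-element subset of `C` is an
up-1-comb. -/
theorem stmt_7 (d : ℕ) (C : Set (Fin d → Sq)) :
    WideComb C ↔ ∀ σ ∈ C, ∀ τ ∈ C, σ ≠ τ → ¬ UpPair σ τ := by
  constructor
  · intro hC σ hσ τ hτ hne hup
    have hpair : FinWideComb {σ, τ} := by
      apply hC
      · rintro x (rfl | rfl) <;> assumption
      · exact (Set.finite_singleton τ).insert σ
      · exact ⟨σ, by simp⟩
    exact finWideComb_no_upPair hpair σ (by simp) τ (by simp) hne hup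
  · intro h A hAC hfin hne
    exact build_finWideComb h A.ncard A hAC hfin hne le_rfl
end

section
/- Let (V₀, E₀) and (V₁, E₁) be cographs with maps f₀ : V₀ → (2²)^d and f₁ : V₁ → (2²)^d each satisfying the up-1-comb/wide-right-1-comb encoding of edges/non-edges. Then the map f on the disjoint union V₀ ⊔ V₁ defined by f(v) = f₀(v)⌢(0,0) for v ∈ V₀ and f(v) = f₁(v)⌢(1,0) for v ∈ V₁ encodes the coproduct graph G₀ ⊕ G₁ into (2²)^{d+1}; and the map defined by f(v) = f₀(v)⌢(0,0) for v ∈ V₀ and f(v) = f₁(v)⌢(0,1) for v ∈ V₁ encodes the join G₀ ∇ G₁ into (2²)^{d+1}. -/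
/-- `{σ, τ}` is a wide right-1-comb: at the end of the longest common prefix the
two sequences have different first coordinates. -/
def WidePair {d : ℕ} (σ τ : Fin d → Sq) : Prop :=
  ∃ t : Fin d, (∀ s, s < t → σ s = τ s) ∧ (σ t).1 ≠ (τ t).1

/-- Auxiliary relation for the disjoint union of two graphs. -/
def sumRel {V W : Type} (G : SimpleGraph V) (H : SimpleGraph W) : V ⊕ W → V ⊕ W → Prop
  | .inl v, .inl v' => G.Adj v v'
  | .inr w, .inr w' => H.Adj w w'
  | _, _ => False

/-- Disjoint union (coproduct) of two simple graphs. -/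
def sumGraph {V W : Type} (G : SimpleGraph V) (H : SimpleGraph W) : SimpleGraph (V ⊕ W) :=
  SimpleGraph.fromRel (sumRel G H)

/-- Auxiliary relation for the join of two graphs. -/
def joinRel {V W : Type} (G : SimpleGraph V) (H : SimpleGraph W) : V ⊕ W → V ⊕ W → Prop
  | .inl v, .inl v' => G.Adj v v'
  | .inr w, .inr w' => H.Adj w w'
  | _, _ => True

/-- Graph join of two simple graphs: disjoint union plus all cross edges. -/
def joinGraph {V W : Type} (G : SimpleGraph V) (H : SimpleGraph W) : SimpleGraph (V ⊕ W) :=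
  SimpleGraph.fromRel (joinRel G H)

/-- Cographs: the smallest class of graphs (up to isomorphism) containing the
one-vertex graph and closed under disjoint unions and graph joins. -/
inductive IsCograph : {V : Type} → SimpleGraph V → Prop
  | single : IsCograph (⊥ : SimpleGraph PUnit)
  | iso {V W : Type} {G : SimpleGraph V} {H : SimpleGraph W} (e : G ≃g H) :
      IsCograph G → IsCograph H
  | coprod {V W : Type} {G : SimpleGraph V} {H : SimpleGraph W} :
      IsCograph G → IsCograph H → IsCograph (sumGraph G H)
  | join {V W : Type} {G : SimpleGraph V} {H : SimpleGraph W} :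
      IsCograph G → IsCograph H → IsCograph (joinGraph G H)

/-- `f` encodes the graph `G` into `(2²)^d`: it is injective, edges correspond to
up-1-combs and non-edges to wide right-1-combs. -/
def IsEncoding {V : Type} {d : ℕ} (G : SimpleGraph V) (f : V → Fin d → Sq) : Prop :=
  Function.Injective f ∧
    ∀ v₀ v₁ : V, v₀ ≠ v₁ →
      ((G.Adj v₀ v₁ ↔ UpPair (f v₀) (f v₁)) ∧
       (¬ G.Adj v₀ v₁ ↔ WidePair (f v₀) (f v₁)))


section Combs

variable {d : ℕ}

theorem forall_lt_succ_cons_eq_iff {α : Type*} {a b : α} {σ τ : Fin d → α} {t : Fin d} :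
    (∀ s, s < t.succ →
        (Fin.cons a σ : Fin (d + 1) → α) s = (Fin.cons b τ : Fin (d + 1) → α) s) ↔
      a = b ∧ ∀ s, s < t → σ s = τ s := by
  simp [Fin.forall_fin_succ]

theorem upPair_cons_iff {a b : Sq} {σ τ : Fin d → Sq} :
    UpPair (Fin.cons a σ : Fin (d + 1) → Sq) (Fin.cons b τ) ↔
      a.1 = b.1 ∧ a.2 ≠ b.2 ∨ a = b ∧ UpPair σ τ := by
  simp [UpPair, Fin.exists_fin_succ, forall_lt_succ_cons_eq_iff, and_assoc]

theorem widePair_cons_iff {a b : Sq} {σ τ : Fin d → Sq} :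
    WidePair (Fin.cons a σ : Fin (d + 1) → Sq) (Fin.cons b τ) ↔
      a.1 ≠ b.1 ∨ a = b ∧ WidePair σ τ := by
  simp [WidePair, Fin.exists_fin_succ, forall_lt_succ_cons_eq_iff, and_assoc]

@[simp]
theorem upPair_cons_cons_iff {a : Sq} {σ τ : Fin d → Sq} :
    UpPair (Fin.cons a σ : Fin (d + 1) → Sq) (Fin.cons a τ) ↔ UpPair σ τ := by
  simp [upPair_cons_iff]

@[simp]
theorem widePair_cons_cons_iff {a : Sq} {σ τ : Fin d → Sq} :
    WidePair (Fin.cons a σ : Fin (d + 1) → Sq) (Fin.cons a τ) ↔ WidePair σ τ := by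
  simp [widePair_cons_iff]

theorem upPair_cons_iff_of_ne {a b : Sq} (hab : a ≠ b) {σ τ : Fin d → Sq} :
    UpPair (Fin.cons a σ : Fin (d + 1) → Sq) (Fin.cons b τ) ↔ a.1 = b.1 := by
  rw [upPair_cons_iff, or_iff_left (fun h => hab h.1), and_iff_left_iff_imp]
  exact fun h₁ h₂ => hab (Prod.ext h₁ h₂)

theorem widePair_cons_iff_of_ne {a b : Sq} (hab : a ≠ b) {σ τ : Fin d → Sq} :
    WidePair (Fin.cons a σ : Fin (d + 1) → Sq) (Fin.cons b τ) ↔ a.1 ≠ b.1 := by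
  rw [widePair_cons_iff, or_iff_left (fun h => hab h.1)]

theorem upPair_comm {σ τ : Fin d → Sq} : UpPair σ τ ↔ UpPair τ σ := by
  constructor <;> rintro ⟨t, hpre, h₁, h₂⟩ <;>
    exact ⟨t, fun s hs => (hpre s hs).symm, h₁.symm, h₂.symm⟩

theorem widePair_comm {σ τ : Fin d → Sq} : WidePair σ τ ↔ WidePair τ σ := by
  constructor <;> rintro ⟨t, hpre, h₁⟩ <;>
    exact ⟨t, fun s hs => (hpre s hs).symm, h₁.symm⟩

end Combs

section Graphs

variable {V W : Type} {G : SimpleGraph V} {H : SimpleGraph W}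

@[simp]
theorem sumGraph_adj_inl_inl {v v' : V} :
    (sumGraph G H).Adj (.inl v) (.inl v') ↔ G.Adj v v' := by
  simpa [sumGraph, sumRel, G.adj_comm v' v] using G.ne_of_adj

@[simp]
theorem sumGraph_adj_inr_inr {w w' : W} :
    (sumGraph G H).Adj (.inr w) (.inr w') ↔ H.Adj w w' := by
  simpa [sumGraph, sumRel, H.adj_comm w' w] using H.ne_of_adj

@[simp]
theorem sumGraph_not_adj_inl_inr {v : V} {w : W} :
    ¬ (sumGraph G H).Adj (.inl v) (.inr w) := by
  simp [sumGraph, sumRel]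

@[simp]
theorem joinGraph_adj_inl_inl {v v' : V} :
    (joinGraph G H).Adj (.inl v) (.inl v') ↔ G.Adj v v' := by
  simpa [joinGraph, joinRel, G.adj_comm v' v] using G.ne_of_adj

@[simp]
theorem joinGraph_adj_inr_inr {w w' : W} :
    (joinGraph G H).Adj (.inr w) (.inr w') ↔ H.Adj w w' := by
  simpa [joinGraph, joinRel, H.adj_comm w' w] using H.ne_of_adj

@[simp]
theorem joinGraph_adj_inl_inr {v : V} {w : W} : (joinGraph G H).Adj (.inl v) (.inr w) := by
  simp [joinGraph, joinRel]

end Graphs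

theorem IsEncoding.sumElim_cons {V₀ V₁ : Type} {d : ℕ} {G₀ : SimpleGraph V₀}
    {G₁ : SimpleGraph V₁} {R : SimpleGraph (V₀ ⊕ V₁)} {f₀ : V₀ → Fin d → Sq}
    {f₁ : V₁ → Fin d → Sq} (he₀ : IsEncoding G₀ f₀) (he₁ : IsEncoding G₁ f₁)
    {a b : Sq} (hab : a ≠ b)
    (hl : ∀ v v', R.Adj (.inl v) (.inl v') ↔ G₀.Adj v v')
    (hr : ∀ w w', R.Adj (.inr w) (.inr w') ↔ G₁.Adj w w')
    (hlr : ∀ v w, R.Adj (.inl v) (.inr w) ↔ a.1 = b.1) :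
    IsEncoding R (Sum.elim (fun v => Fin.cons a (f₀ v)) (fun w => Fin.cons b (f₁ w))) := by
  refine ⟨Function.Injective.sumElim (fun _ _ h => he₀.1 (Fin.cons_inj.mp h).2)
    (fun _ _ h => he₁.1 (Fin.cons_inj.mp h).2) fun _ _ h => hab (Fin.cons_inj.mp h).1, ?_⟩
  rintro (v | w) (v' | w') hne
  · simpa [hl] using he₀.2 v v' (ne_of_apply_ne _ hne)
  · simp only [Sum.elim_inl, Sum.elim_inr, hlr, upPair_cons_iff_of_ne hab,
      widePair_cons_iff_of_ne hab, and_self]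
  · simp only [Sum.elim_inl, Sum.elim_inr, R.adj_comm (.inr w), hlr,
      upPair_comm (σ := Fin.cons b _), widePair_comm (σ := Fin.cons b _),
      upPair_cons_iff_of_ne hab, widePair_cons_iff_of_ne hab, and_self]
  · simpa [hr] using he₁.2 w w' (ne_of_apply_ne _ hne)

theorem stmt_17_general {V₀ V₁ : Type} {d : ℕ} (G₀ : SimpleGraph V₀) (G₁ : SimpleGraph V₁)
    (f₀ : V₀ → Fin d → Sq) (f₁ : V₁ → Fin d → Sq)
    (he₀ : IsEncoding G₀ f₀) (he₁ : IsEncoding G₁ f₁) :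
    IsEncoding (sumGraph G₀ G₁)
      (Sum.elim (fun v => Fin.cons ((0 : Fin 2), (0 : Fin 2)) (f₀ v))
        (fun v => Fin.cons ((1 : Fin 2), (0 : Fin 2)) (f₁ v))) ∧
    IsEncoding (joinGraph G₀ G₁)
      (Sum.elim (fun v => Fin.cons ((0 : Fin 2), (0 : Fin 2)) (f₀ v))
        (fun v => Fin.cons ((0 : Fin 2), (1 : Fin 2)) (f₁ v))) :=
  ⟨he₀.sumElim_cons he₁ (by decide) (fun _ _ => sumGraph_adj_inl_inl)
      (fun _ _ => sumGraph_adj_inr_inr) (by simp),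
    he₀.sumElim_cons he₁ (by decide) (fun _ _ => joinGraph_adj_inl_inl)
      (fun _ _ => joinGraph_adj_inr_inr) (by simp)⟩

/-- Given encodings of two cographs into `(2²)^d`, attaching a fresh coordinate with
values `(0,0)`/`(1,0)` encodes the coproduct, and with values `(0,0)`/`(0,1)` encodes
the join, into `(2²)^{d+1}`. -/
theorem stmt_17 {V₀ V₁ : Type} {d : ℕ} (G₀ : SimpleGraph V₀) (G₁ : SimpleGraph V₁)
    (h₀ : IsCograph G₀) (h₁ : IsCograph G₁)
    (f₀ : V₀ → Fin d → Sq) (f₁ : V₁ → Fin d → Sq)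
    (he₀ : IsEncoding G₀ f₀) (he₁ : IsEncoding G₁ f₁) :
    IsEncoding (sumGraph G₀ G₁)
      (Sum.elim (fun v => Fin.cons ((0 : Fin 2), (0 : Fin 2)) (f₀ v))
        (fun v => Fin.cons ((1 : Fin 2), (0 : Fin 2)) (f₁ v))) ∧
    IsEncoding (joinGraph G₀ G₁)
      (Sum.elim (fun v => Fin.cons ((0 : Fin 2), (0 : Fin 2)) (f₀ v))
        (fun v => Fin.cons ((0 : Fin 2), (1 : Fin 2)) (f₁ v))) :=
  stmt_17_general G₀ G₁ f₀ f₁ he₀ he₁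
end
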